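/- arXiv:1409.4988 — 2 statements merged into one kernel-verified Lean document; each statement's English description precedes it below -/
import Mathlib

section
/- Cheeger's inequality (hard direction): for a finite connected weighted graph, Φ(G) ≤ √(8(1 − λ₂)), where λ₂ is the second largest eigenvalue of the normalized adjacency matrix N. -/
/-!
Put `y = D^{-1/2} v₂`, so that `A y = λ₂ D y` and `∑ dᵢ yᵢ = 0`; its energy
`E(y) = ∑ᵢⱼ Aᵢⱼ (yᵢ - yⱼ)²` equals `2 (1 - λ₂) Q(y)` with `Q(y) = ∑ dᵢ yᵢ²`. Subtracting a
weighted median `m` leaves `E` unchanged and, as `y ⊥ d`, only increases `Q`; since `E` and `Q`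
split over positive and negative parts, one of `(y - m)⁺`, `(y - m)⁻` is a nonnegative `f` with
`E(f) ≤ 2 (1 - λ₂) Q(f)` and support of at most half the volume. Cauchy–Schwarz gives
`∑ Aᵢⱼ |fᵢ² - fⱼ²| ≤ 2 √(E(f) Q(f))`, and by the coarea formula the left side is
`∫ 2 cut {f² > t} dt` while `Q(f) = ∫ vol {f² > t} dt`, so some superlevel set `S` of `f²` has
`cut S ≤ √(E(f) / Q(f)) vol S ≤ √(2 (1 - λ₂)) vol S`.
-/

open Matrix BigOperators

open Finset

namespace Cheeger

open MeasureTheory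

lemma posPart_mul_negPart_eq_zero (a : ℝ) : a⁺ * a⁻ = 0 := by
  rcases le_total 0 a with ha | ha
  · rw [negPart_eq_zero.2 ha, mul_zero]
  · rw [posPart_eq_zero.2 ha, zero_mul]

lemma sq_posPart_add_sq_negPart (a : ℝ) : a⁺ ^ 2 + a⁻ ^ 2 = a ^ 2 := by
  nth_rw 3 [← posPart_sub_negPart a]
  linear_combination 2 * posPart_mul_negPart_eq_zero a

lemma sq_posPart_sub_add_sq_negPart_sub_le (a b : ℝ) :
    (a⁺ - b⁺) ^ 2 + (a⁻ - b⁻) ^ 2 ≤ (a - b) ^ 2 := by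
  nth_rw 3 [← posPart_sub_negPart a, ← posPart_sub_negPart b]
  nlinarith [posPart_mul_negPart_eq_zero a, posPart_mul_negPart_eq_zero b,
    mul_nonneg (posPart_nonneg a) (negPart_nonneg b),
    mul_nonneg (posPart_nonneg b) (negPart_nonneg a)]

lemma exists_le_mul_of_add_le {E₁ E₂ Q₁ Q₂ c : ℝ} (hE : E₁ + E₂ ≤ c * (Q₁ + Q₂))
    (hQ : 0 < Q₁ + Q₂) (hE₁ : 0 ≤ E₁) (hE₂ : 0 ≤ E₂) (hQ₁ : 0 ≤ Q₁) (hQ₂ : 0 ≤ Q₂) :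
    (0 < Q₁ ∧ E₁ ≤ c * Q₁) ∨ (0 < Q₂ ∧ E₂ ≤ c * Q₂) := by
  by_contra! h
  rcases hQ₁.eq_or_lt with rfl | h₁ <;> rcases hQ₂.eq_or_lt with rfl | h₂
  · linarith
  · linarith [h.2 h₂]
  · linarith [h.1 h₁]
  · linarith [h.1 h₁, h.2 h₂]

lemma sqrt_mul_sq_mul_sqrt_mul_sq {a : ℝ} (ha : 0 ≤ a) (x y : ℝ) :
    √(a * x ^ 2) * √(a * y ^ 2) = a * |x * y| := by
  rw [Real.sqrt_mul ha, Real.sqrt_mul ha, Real.sqrt_sq_eq_abs, Real.sqrt_sq_eq_abs, abs_mul]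
  nth_rw 3 [← Real.mul_self_sqrt ha]
  ring

lemma sqrt_div_mul_self {E Q : ℝ} (hQ : 0 < Q) : √(E / Q) * Q = √(E * Q) := by
  rw [← Real.sqrt_sq hQ.le, ← Real.sqrt_mul' _ (sq_nonneg Q), Real.sqrt_sq hQ.le]
  congr 1
  field_simp

lemma intervalIntegrable_ite_lt (a x y : ℝ) :
    IntervalIntegrable (fun t => if t < a then (1:ℝ) else 0) volume x y :=
  Antitone.intervalIntegrable fun s t hst => by
    split_ifs <;> grind

lemma integral_ite_lt {a M : ℝ} (ha : 0 ≤ a) (haM : a ≤ M) :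
    ∫ t in (0:ℝ)..M, (if t < a then (1:ℝ) else 0) = a := by
  have hind : (fun t : ℝ => if t < a then (1:ℝ) else 0) = (Set.Iio a).indicator 1 := by
    ext t
    simp [Set.indicator_apply]
  have hinter : Set.Iio a ∩ Set.Ioc 0 M = Set.Ioo 0 a := by
    ext t
    simp only [Set.mem_inter_iff, Set.mem_Iio, Set.mem_Ioc, Set.mem_Ioo]
    exact ⟨fun h => ⟨h.2.1, h.1⟩, fun h => ⟨h.2, h.1, h.2.le.trans haM⟩⟩
  rw [hind, intervalIntegral.integral_of_le (ha.trans haM),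
    integral_indicator measurableSet_Iio]
  simp [hinter, ha]

lemma abs_ite_lt_sub_ite_lt (t a b : ℝ) :
    |(if t < a then (1:ℝ) else 0) - (if t < b then 1 else 0)| =
      (if t < max a b then 1 else 0) - (if t < min a b then 1 else 0) := by
  split_ifs <;> grind

variable {ι : Type*} [Fintype ι] {A : ι → ι → ℝ} {d : ι → ℝ}

def energy (A : ι → ι → ℝ) (f : ι → ℝ) : ℝ := ∑ i, ∑ j, A i j * (f i - f j) ^ 2

def weightedSqNorm (d f : ι → ℝ) : ℝ := ∑ i, d i * f i ^ 2

noncomputable def superlevel (f : ι → ℝ) (t : ℝ) : Finset ι := univ.filter (fun i => t < f i)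

@[simp]
lemma mem_superlevel {f : ι → ℝ} {t : ℝ} {i : ι} : i ∈ superlevel f t ↔ t < f i := by
  simp [superlevel]

lemma energy_nonneg (hnn : ∀ i j, 0 ≤ A i j) (f : ι → ℝ) : 0 ≤ energy A f :=
  sum_nonneg fun i _ => sum_nonneg fun j _ => mul_nonneg (hnn i j) (sq_nonneg _)

lemma weightedSqNorm_nonneg (hd : ∀ i, 0 ≤ d i) (f : ι → ℝ) : 0 ≤ weightedSqNorm d f :=
  sum_nonneg fun i _ => mul_nonneg (hd i) (sq_nonneg _)

lemma sum_sum_mul_sq_left (hd : ∀ i, d i = ∑ j, A i j) (f : ι → ℝ) :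
    ∑ i, ∑ j, A i j * f i ^ 2 = weightedSqNorm d f := by
  simp only [weightedSqNorm, hd, sum_mul]

lemma sum_sum_mul_sq_right (hA : ∀ i j, A i j = A j i) (hd : ∀ i, d i = ∑ j, A i j)
    (f : ι → ℝ) : ∑ i, ∑ j, A i j * f j ^ 2 = weightedSqNorm d f := by
  rw [sum_comm, ← sum_sum_mul_sq_left hd]
  simp only [hA]

lemma energy_eq (hA : ∀ i j, A i j = A j i) (hd : ∀ i, d i = ∑ j, A i j) (f : ι → ℝ) :
    energy A f = 2 * (weightedSqNorm d f - ∑ i, ∑ j, A i j * (f i * f j)) := by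
  have hexpand : energy A f = ∑ i, ∑ j, A i j * f i ^ 2 + ∑ i, ∑ j, A i j * f j ^ 2
      - 2 * ∑ i, ∑ j, A i j * (f i * f j) := by
    simp only [energy, mul_sum, ← sum_add_distrib, ← sum_sub_distrib]
    exact sum_congr rfl fun i _ => sum_congr rfl fun j _ => by ring
  rw [hexpand, sum_sum_mul_sq_left hd, sum_sum_mul_sq_right hA hd]
  ring

lemma energy_eq_of_eigen (hA : ∀ i j, A i j = A j i) (hd : ∀ i, d i = ∑ j, A i j)
    {y : ι → ℝ} {μ : ℝ} (hy : ∀ i, ∑ j, A i j * y j = μ * (d i * y i)) :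
    energy A y = 2 * (1 - μ) * weightedSqNorm d y := by
  have hquad : ∑ i, ∑ j, A i j * (y i * y j) = μ * weightedSqNorm d y := by
    simp only [weightedSqNorm, mul_sum]
    refine sum_congr rfl fun i _ => ?_
    calc ∑ j, A i j * (y i * y j) = y i * ∑ j, A i j * y j := by
          rw [mul_sum]
          exact sum_congr rfl fun j _ => by ring
      _ = μ * (d i * y i ^ 2) := by
          rw [hy i]
          ring
  rw [energy_eq hA hd, hquad]
  ring

lemma energy_sub_const (f : ι → ℝ) (m : ℝ) : energy A (fun i => f i - m) = energy A f := by
  simp only [energy, sub_sub_sub_cancel_right]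

lemma weightedSqNorm_sub_const {f : ι → ℝ} (hf : ∑ i, d i * f i = 0) (m : ℝ) :
    weightedSqNorm d (fun i => f i - m) = weightedSqNorm d f + m ^ 2 * ∑ i, d i := by
  have hexpand : ∑ i, d i * (f i - m) ^ 2 =
      ∑ i, d i * f i ^ 2 - 2 * m * ∑ i, d i * f i + m ^ 2 * ∑ i, d i := by
    simp only [mul_sum, ← sum_sub_distrib, ← sum_add_distrib]
    exact sum_congr rfl fun i _ => by ring
  rw [weightedSqNorm, weightedSqNorm, hexpand, hf]
  ring

lemma energy_posPart_add_energy_negPart_le (hnn : ∀ i j, 0 ≤ A i j) (f : ι → ℝ) :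
    energy A f⁺ + energy A f⁻ ≤ energy A f := by
  simp only [energy, ← sum_add_distrib, ← mul_add, Pi.posPart_apply, Pi.negPart_apply]
  exact sum_le_sum fun i _ => sum_le_sum fun j _ =>
    mul_le_mul_of_nonneg_left (sq_posPart_sub_add_sq_negPart_sub_le _ _) (hnn i j)

lemma weightedSqNorm_posPart_add_negPart (f : ι → ℝ) :
    weightedSqNorm d f⁺ + weightedSqNorm d f⁻ = weightedSqNorm d f := by
  simp only [weightedSqNorm, ← sum_add_distrib, ← mul_add, Pi.posPart_apply, Pi.negPart_apply,
    sq_posPart_add_sq_negPart]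

lemma sum_sum_mul_sq_add (hA : ∀ i j, A i j = A j i) (hd : ∀ i, d i = ∑ j, A i j)
    (f : ι → ℝ) : ∑ i, ∑ j, A i j * (f i + f j) ^ 2 = 4 * weightedSqNorm d f - energy A f := by
  have hexpand : ∑ i, ∑ j, A i j * (f i + f j) ^ 2 = ∑ i, ∑ j, A i j * f i ^ 2
      + ∑ i, ∑ j, A i j * f j ^ 2 + 2 * ∑ i, ∑ j, A i j * (f i * f j) := by
    simp only [mul_sum, ← sum_add_distrib]
    exact sum_congr rfl fun i _ => sum_congr rfl fun j _ => by ring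
  rw [hexpand, sum_sum_mul_sq_left hd, sum_sum_mul_sq_right hA hd, energy_eq hA hd]
  ring

lemma sum_mul_abs_sq_sub_sq_le (hA : ∀ i j, A i j = A j i) (hnn : ∀ i j, 0 ≤ A i j)
    (hd : ∀ i, d i = ∑ j, A i j) (f : ι → ℝ) :
    ∑ i, ∑ j, A i j * |f i ^ 2 - f j ^ 2| ≤ 2 * √(energy A f * weightedSqNorm d f) := by
  have hpair : ∀ i j, A i j * |f i ^ 2 - f j ^ 2| =
      √(A i j * (f i - f j) ^ 2) * √(A i j * (f i + f j) ^ 2) := fun i j => by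
    rw [sqrt_mul_sq_mul_sqrt_mul_sq (hnn i j),
      show f i ^ 2 - f j ^ 2 = (f i - f j) * (f i + f j) by ring]
  have hcs := Real.sum_sqrt_mul_sqrt_le (univ : Finset (ι × ι))
    (f := fun p => A p.1 p.2 * (f p.1 - f p.2) ^ 2)
    (g := fun p => A p.1 p.2 * (f p.1 + f p.2) ^ 2)
    (fun p => mul_nonneg (hnn _ _) (sq_nonneg _)) (fun p => mul_nonneg (hnn _ _) (sq_nonneg _))
  simp only [Fintype.sum_prod_type] at hcs
  rw [← energy, sum_sum_mul_sq_add hA hd] at hcs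
  simp only [hpair]
  calc _ ≤ √(energy A f) * √(4 * weightedSqNorm d f - energy A f) := hcs
    _ ≤ √(energy A f) * √(4 * weightedSqNorm d f) := by
        gcongr
        linarith [energy_nonneg hnn f]
    _ = 2 * √(energy A f * weightedSqNorm d f) := by
        rw [Real.sqrt_mul (by norm_num), Real.sqrt_mul (energy_nonneg hnn f),
          show (4:ℝ) = 2 ^ 2 by norm_num, Real.sqrt_sq zero_le_two]
        ring

lemma sum_mul_div_sqrt_of_mulVec_eq {N : Matrix ι ι ℝ} (hdpos : ∀ i, 0 < d i)
    (hN : ∀ i j, N i j = A i j / (√(d i) * √(d j))) {v : ι → ℝ} {μ : ℝ}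
    (heig : N *ᵥ v = μ • v) (i : ι) :
    ∑ j, A i j * (v j / √(d j)) = μ * (d i * (v i / √(d i))) := by
  have hrow := congrFun heig i
  simp only [mulVec, dotProduct, hN, Pi.smul_apply, smul_eq_mul] at hrow
  have hsqrt : ∀ j, √(d j) ≠ 0 := fun j => (Real.sqrt_pos.2 (hdpos j)).ne'
  calc ∑ j, A i j * (v j / √(d j)) = √(d i) * ∑ j, A i j / (√(d i) * √(d j)) * v j := by
        rw [mul_sum]
        refine sum_congr rfl fun j _ => ?_
        field_simp [hsqrt i, hsqrt j]
    _ = μ * (d i * (v i / √(d i))) := by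
        rw [hrow]
        field_simp [hsqrt i]
        rw [Real.sq_sqrt (hdpos i).le]
        ring

lemma sum_mul_div_sqrt (v : ι → ℝ) : ∑ i, d i * (v i / √(d i)) = ∑ i, v i * √(d i) :=
  sum_congr rfl fun i _ => by rw [mul_div_left_comm, Real.div_sqrt, mul_comm]

-- `superlevel (-y) (-m)` is the strict sublevel set `{i | y i < m}`.
lemma exists_weighted_median [Nonempty ι] (hd : ∀ i, 0 ≤ d i) (y : ι → ℝ) :
    ∃ m, 2 * ∑ i ∈ superlevel y m, d i ≤ ∑ i, d i ∧
      2 * ∑ i ∈ superlevel (-y) (-m), d i ≤ ∑ i, d i := by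
  obtain ⟨imax, hmax⟩ := Finite.exists_max y
  have hcand : (univ.filter fun i => 2 * ∑ j ∈ superlevel y (y i), d j ≤ ∑ j, d j).Nonempty := by
    refine ⟨imax, mem_filter.2 ⟨mem_univ _, ?_⟩⟩
    rw [show superlevel y (y imax) = ∅ from
      eq_empty_of_forall_notMem fun j hj => (mem_superlevel.1 hj).not_ge (hmax j)]
    simpa using sum_nonneg fun j _ => hd j
  obtain ⟨i₀, hi₀, hmin⟩ := exists_min_image _ y hcand
  refine ⟨y i₀, (mem_filter.1 hi₀).2, ?_⟩
  by_contra! hbig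
  have hbelow : (superlevel (-y) (-y i₀)).Nonempty := by
    by_contra hempty
    simp [not_nonempty_iff_eq_empty.1 hempty] at hbig
    linarith [sum_nonneg fun j (_ : j ∈ univ) => hd j]
  obtain ⟨j, hj, hjmax⟩ := exists_max_image _ y hbelow
  have hsplit : ∑ k ∈ superlevel y (y j), d k + ∑ k ∈ superlevel (-y) (-y i₀), d k =
      ∑ k, d k := by
    rw [← sum_filter_add_sum_filter_not univ (fun k => y j < y k) d]
    congr 2
    ext k
    simp only [mem_filter, mem_univ, true_and, not_lt, mem_superlevel, Pi.neg_apply, neg_lt_neg_iff]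
    exact ⟨fun hk => hjmax k (by simpa using hk), fun hk => lt_of_le_of_lt hk (by simpa using hj)⟩
  have hj_cand : j ∈ univ.filter fun i => 2 * ∑ k ∈ superlevel y (y i), d k ≤ ∑ k, d k :=
    mem_filter.2 ⟨mem_univ _, by linarith⟩
  have := hmin j hj_cand
  simp only [mem_superlevel, Pi.neg_apply, neg_lt_neg_iff] at hj
  linarith

theorem exists_nonneg_energy_le_of_eigen (hA : ∀ i j, A i j = A j i) (hnn : ∀ i j, 0 ≤ A i j)
    (hd : ∀ i, d i = ∑ j, A i j) (hdpos : ∀ i, 0 < d i) {y : ι → ℝ} {μ : ℝ} (hy0 : y ≠ 0)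
    (horth : ∑ i, d i * y i = 0) (heig : ∀ i, ∑ j, A i j * y j = μ * (d i * y i)) :
    ∃ f : ι → ℝ, (∀ i, 0 ≤ f i) ∧ 0 < weightedSqNorm d f ∧
      energy A f ≤ 2 * (1 - μ) * weightedSqNorm d f ∧
      2 * ∑ i ∈ superlevel f 0, d i ≤ ∑ i, d i := by
  obtain ⟨i₁, hi₁ : y i₁ ≠ 0⟩ := Function.ne_iff.1 hy0
  have : Nonempty ι := ⟨i₁⟩
  have hdnn : ∀ i, 0 ≤ d i := fun i => (hdpos i).le
  have hQy : 0 < weightedSqNorm d y :=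
    sum_pos' (fun i _ => mul_nonneg (hdnn i) (sq_nonneg _))
      ⟨i₁, mem_univ _, mul_pos (hdpos i₁) (by positivity)⟩
  have hEy := energy_eq_of_eigen hA hd heig
  have hμ : 0 ≤ 1 - μ := by nlinarith [energy_nonneg hnn y]
  obtain ⟨m, hup, hdown⟩ := exists_weighted_median hdnn y
  set g : ι → ℝ := fun i => y i - m
  have hQg : weightedSqNorm d y ≤ weightedSqNorm d g := by
    rw [weightedSqNorm_sub_const horth]
    nlinarith [sum_nonneg fun i (_ : i ∈ univ) => hdnn i]
  have hEg : energy A g⁺ + energy A g⁻ ≤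
      2 * (1 - μ) * (weightedSqNorm d g⁺ + weightedSqNorm d g⁻) := by
    rw [weightedSqNorm_posPart_add_negPart]
    calc _ ≤ energy A g := energy_posPart_add_energy_negPart_le hnn g
      _ = 2 * (1 - μ) * weightedSqNorm d y := by rw [energy_sub_const, hEy]
      _ ≤ 2 * (1 - μ) * weightedSqNorm d g := by gcongr
  rcases exists_le_mul_of_add_le hEg (by rw [weightedSqNorm_posPart_add_negPart]; linarith)
      (energy_nonneg hnn _) (energy_nonneg hnn _) (weightedSqNorm_nonneg hdnn _)
      (weightedSqNorm_nonneg hdnn _) with ⟨hpos, hle⟩ | ⟨hpos, hle⟩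
  · refine ⟨g⁺, fun i => posPart_nonneg _, hpos, hle, ?_⟩
    have hsupp : superlevel g⁺ 0 = superlevel y m := by
      ext i
      simp [g]
    rwa [hsupp]
  · refine ⟨g⁻, fun i => negPart_nonneg _, hpos, hle, ?_⟩
    have hsupp : superlevel g⁻ 0 = superlevel (-y) (-m) := by
      ext i
      simp [g]
    rwa [hsupp]

lemma sum_superlevel (f : ι → ℝ) (t : ℝ) :
    ∑ i ∈ superlevel f t, d i = ∑ i, d i * if t < f i then 1 else 0 := by
  simp [superlevel, sum_filter]

lemma intervalIntegrable_sum_superlevel (f : ι → ℝ) (x y : ℝ) :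
    IntervalIntegrable (fun t => ∑ i ∈ superlevel f t, d i) volume x y := by
  simpa only [sum_superlevel, sum_fn] using IntervalIntegrable.sum univ fun i _ =>
    (intervalIntegrable_ite_lt (f i) x y).const_mul (d i)

lemma integral_sum_superlevel {f : ι → ℝ} {M : ℝ} (hf0 : ∀ i, 0 ≤ f i) (hfM : ∀ i, f i ≤ M) :
    ∫ t in (0:ℝ)..M, ∑ i ∈ superlevel f t, d i = ∑ i, d i * f i := by
  simp only [sum_superlevel]
  rw [intervalIntegral.integral_finsetSum fun i _ =>
    (intervalIntegrable_ite_lt _ _ _).const_mul _]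
  simp only [intervalIntegral.integral_const_mul, integral_ite_lt (hf0 _) (hfM _)]

variable [DecidableEq ι]

def cutWeight (A : ι → ι → ℝ) (S : Finset ι) : ℝ := ∑ u ∈ S, ∑ v ∈ Sᶜ, A u v

lemma cutWeight_eq_sum_ite (A : ι → ι → ℝ) (S : Finset ι) :
    cutWeight A S = ∑ i, ∑ j, if i ∈ S ∧ j ∉ S then A i j else 0 := by
  rw [cutWeight, ← Fintype.sum_ite_mem]
  refine sum_congr rfl fun i _ => ?_
  rw [← Fintype.sum_ite_mem]
  by_cases hi : i ∈ S <;> simp [hi]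

lemma two_mul_cutWeight (hA : ∀ i j, A i j = A j i) (S : Finset ι) :
    2 * cutWeight A S =
      ∑ i, ∑ j, A i j * |(if i ∈ S then 1 else 0) - (if j ∈ S then 1 else 0)| := by
  have hpair : ∀ i j, A i j * |(if i ∈ S then (1:ℝ) else 0) - (if j ∈ S then 1 else 0)| =
      (if i ∈ S ∧ j ∉ S then A i j else 0) + (if j ∈ S ∧ i ∉ S then A j i else 0) := by
    intro i j
    rw [hA j i]
    by_cases hi : i ∈ S <;> by_cases hj : j ∈ S <;> simp [hi, hj]
  simp only [hpair, sum_add_distrib]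
  rw [sum_comm (f := fun i j => if j ∈ S ∧ i ∉ S then A j i else 0), ← cutWeight_eq_sum_ite]
  ring

lemma two_mul_cutWeight_superlevel (hA : ∀ i j, A i j = A j i) (f : ι → ℝ) (t : ℝ) :
    2 * cutWeight A (superlevel f t) = ∑ i, ∑ j, A i j *
      ((if t < max (f i) (f j) then 1 else 0) - if t < min (f i) (f j) then 1 else 0) := by
  simp only [two_mul_cutWeight hA, mem_superlevel, abs_ite_lt_sub_ite_lt]

lemma intervalIntegrable_two_mul_cutWeight_superlevel (hA : ∀ i j, A i j = A j i)
    (f : ι → ℝ) (x y : ℝ) :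
    IntervalIntegrable (fun t => 2 * cutWeight A (superlevel f t)) volume x y := by
  simpa only [two_mul_cutWeight_superlevel hA, sum_fn] using
    IntervalIntegrable.sum univ fun i _ => IntervalIntegrable.sum univ fun j _ =>
      ((intervalIntegrable_ite_lt (max (f i) (f j)) x y).sub
        (intervalIntegrable_ite_lt (min (f i) (f j)) x y)).const_mul (A i j)

lemma integral_two_mul_cutWeight_superlevel (hA : ∀ i j, A i j = A j i) {f : ι → ℝ} {M : ℝ}
    (hf0 : ∀ i, 0 ≤ f i) (hfM : ∀ i, f i ≤ M) :
    ∫ t in (0:ℝ)..M, 2 * cutWeight A (superlevel f t) = ∑ i, ∑ j, A i j * |f i - f j| := by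
  simp only [two_mul_cutWeight_superlevel hA, ← Fintype.sum_prod_type']
  rw [intervalIntegral.integral_finsetSum fun p _ =>
    ((intervalIntegrable_ite_lt _ _ _).sub (intervalIntegrable_ite_lt _ _ _)).const_mul _]
  refine sum_congr rfl fun ⟨i, j⟩ _ => ?_
  rw [intervalIntegral.integral_const_mul, intervalIntegral.integral_sub
    (intervalIntegrable_ite_lt _ _ _) (intervalIntegrable_ite_lt _ _ _),
    integral_ite_lt (le_max_of_le_left (hf0 i)) (max_le (hfM i) (hfM j)),
    integral_ite_lt (le_min (hf0 i) (hf0 j)) (min_le_of_left_le (hfM i)), max_sub_min_eq_abs']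

theorem exists_superlevel_cutWeight_le (hA : ∀ i j, A i j = A j i) {f : ι → ℝ}
    (hf0 : ∀ i, 0 ≤ f i) (hpos : ∃ i, 0 < f i) (c : ℝ)
    (hle : ∑ i, ∑ j, A i j * |f i - f j| ≤ 2 * c * ∑ i, d i * f i) :
    ∃ t, 0 < t ∧ (superlevel f t).Nonempty ∧
      cutWeight A (superlevel f t) ≤ c * ∑ i ∈ superlevel f t, d i := by
  obtain ⟨i₀, hi₀⟩ := hpos
  have : Nonempty ι := ⟨i₀⟩
  obtain ⟨imax, hmax⟩ := Finite.exists_max f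
  by_contra! hlt
  have hgap : ∀ t ∈ Set.Ioo 0 (f imax),
      0 < 2 * cutWeight A (superlevel f t) - 2 * c * ∑ i ∈ superlevel f t, d i :=
    fun t ht => by linarith [hlt t ht.1 ⟨imax, mem_superlevel.2 ht.2⟩]
  have hint := intervalIntegral.intervalIntegral_pos_of_pos_on
    ((intervalIntegrable_two_mul_cutWeight_superlevel hA f _ _).sub
      ((intervalIntegrable_sum_superlevel f _ _).const_mul (2 * c))) hgap
    (hi₀.trans_le (hmax i₀))
  rw [intervalIntegral.integral_sub (intervalIntegrable_two_mul_cutWeight_superlevel hA f _ _)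
      ((intervalIntegrable_sum_superlevel f _ _).const_mul (2 * c)),
    integral_two_mul_cutWeight_superlevel hA hf0 hmax, intervalIntegral.integral_const_mul,
    integral_sum_superlevel hf0 hmax] at hint
  linarith

theorem exists_cutWeight_le_sqrt_energy_div (hA : ∀ i j, A i j = A j i)
    (hnn : ∀ i j, 0 ≤ A i j) (hd : ∀ i, d i = ∑ j, A i j) {f : ι → ℝ} (hf0 : ∀ i, 0 ≤ f i)
    (hQ : 0 < weightedSqNorm d f) :
    ∃ S : Finset ι, S.Nonempty ∧ S ⊆ superlevel f 0 ∧
      cutWeight A S ≤ √(energy A f / weightedSqNorm d f) * ∑ i ∈ S, d i := by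
  have hpos : ∃ i, 0 < f i ^ 2 := by
    by_contra! hzero
    have : weightedSqNorm d f = 0 :=
      sum_eq_zero fun i _ => by rw [le_antisymm (hzero i) (sq_nonneg _), mul_zero]
    exact hQ.ne' this
  have hle : ∑ i, ∑ j, A i j * |f i ^ 2 - f j ^ 2| ≤
      2 * √(energy A f / weightedSqNorm d f) * ∑ i, d i * f i ^ 2 := by
    rw [mul_assoc, ← weightedSqNorm, sqrt_div_mul_self hQ]
    exact sum_mul_abs_sq_sub_sq_le hA hnn hd f
  obtain ⟨t, ht, hne, hcut⟩ := exists_superlevel_cutWeight_le hA (fun i => sq_nonneg (f i))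
    hpos _ hle
  refine ⟨_, hne, fun i hi => ?_, hcut⟩
  have hfi : 0 < f i ^ 2 := ht.trans ((mem_superlevel (f := fun i => f i ^ 2)).1 hi)
  exact mem_superlevel.2 ((hf0 i).lt_of_ne (by rintro h; simp [← h] at hfi))

theorem exists_cutWeight_le_of_eigen (hA : ∀ i j, A i j = A j i) (hnn : ∀ i j, 0 ≤ A i j)
    (hd : ∀ i, d i = ∑ j, A i j) (hdpos : ∀ i, 0 < d i) {y : ι → ℝ} {μ : ℝ} (hy0 : y ≠ 0)
    (horth : ∑ i, d i * y i = 0) (heig : ∀ i, ∑ j, A i j * y j = μ * (d i * y i)) :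
    ∃ S : Finset ι, S.Nonempty ∧ 2 * ∑ i ∈ S, d i ≤ ∑ i, d i ∧
      cutWeight A S ≤ √(2 * (1 - μ)) * ∑ i ∈ S, d i := by
  obtain ⟨f, hf0, hQ, hE, hsupp⟩ :=
    exists_nonneg_energy_le_of_eigen hA hnn hd hdpos hy0 horth heig
  obtain ⟨S, hS, hSf, hcut⟩ := exists_cutWeight_le_sqrt_energy_div hA hnn hd hf0 hQ
  refine ⟨S, hS, ?_, hcut.trans ?_⟩
  · linarith [sum_le_sum_of_subset_of_nonneg hSf fun i _ _ => (hdpos i).le]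
  · gcongr
    · exact sum_nonneg fun i _ => (hdpos i).le
    · exact div_le_of_le_mul₀ hQ.le (by nlinarith [energy_nonneg hnn f]) hE

end Cheeger

open Cheeger

theorem cheeger_hard_direction_general {n : ℕ}
    (A : Matrix (Fin n) (Fin n) ℝ) (hsym : A.IsSymm) (hnn : ∀ i j, 0 ≤ A i j)
    (deg : Fin n → ℝ) (hdeg : ∀ i, deg i = ∑ j, A i j) (hdpos : ∀ i, 0 < deg i)
    (N : Matrix (Fin n) (Fin n) ℝ)
    (hN : ∀ i j, N i j = A i j / (Real.sqrt (deg i) * Real.sqrt (deg j)))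
    (w : Fin n → ℝ) (hw : ∀ i, w i = Real.sqrt (deg i))
    (lam2 : ℝ) (v2 : Fin n → ℝ) (hv2 : v2 ≠ 0) (hv2w : v2 ⬝ᵥ w = 0)
    (heig : N.mulVec v2 = lam2 • v2)
    (cut vol : Finset (Fin n) → ℝ)
    (hcut : ∀ S, cut S = ∑ u ∈ S, ∑ v ∈ Sᶜ, A u v)
    (hvol : ∀ S, vol S = ∑ u ∈ S, ∑ v, A u v)
    (phi : Finset (Fin n) → ℝ)
    (hphi : ∀ S, phi S = cut S / min (vol S) (vol Sᶜ))
    (cand : Finset (Finset (Fin n)))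
    (hcand : cand = Finset.univ.filter (fun S => S.Nonempty ∧ S ≠ Finset.univ))
    (hne : cand.Nonempty) :
    cand.inf' hne phi ≤ Real.sqrt (8 * (1 - lam2)) := by
  have hy0 : (fun i => v2 i / √(deg i)) ≠ 0 := fun h => hv2 <| funext fun i => by
    simpa [(Real.sqrt_pos.2 (hdpos i)).ne'] using congrFun h i
  have horth : ∑ i, deg i * (v2 i / √(deg i)) = 0 := by
    rw [sum_mul_div_sqrt]
    simpa [dotProduct, hw] using hv2w
  obtain ⟨S, hS, hhalf, hScut⟩ := exists_cutWeight_le_of_eigen (fun i j => hsym.apply j i) hnn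
    hdeg hdpos hy0 horth (sum_mul_div_sqrt_of_mulVec_eq hdpos hN heig)
  have hvolS : vol S = ∑ i ∈ S, deg i := by simp only [hvol, hdeg]
  have hvolSc : vol Sᶜ = ∑ i ∈ Sᶜ, deg i := by simp only [hvol, hdeg]
  have hSpos : 0 < ∑ i ∈ S, deg i := sum_pos (fun i _ => hdpos i) hS
  have hcompl := sum_add_sum_compl S deg
  have hSuniv : S ≠ univ := by
    rintro rfl
    linarith
  calc cand.inf' hne phi ≤ phi S := inf'_le _ (by simp [hcand, hS, hSuniv])
    _ ≤ √(2 * (1 - lam2)) := by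
        rw [hphi, hcut, hvolS, hvolSc, min_eq_left (by linarith)]
        exact div_le_of_le_mul₀ hSpos.le (Real.sqrt_nonneg _) hScut
    _ ≤ √(8 * (1 - lam2)) := by
        rcases le_or_gt 0 (1 - lam2) with hlam | hlam
        · exact Real.sqrt_le_sqrt (by linarith)
        · rw [Real.sqrt_eq_zero'.2 (by linarith)]
          exact Real.sqrt_nonneg _

/-- Cheeger's inequality, hard direction: `Φ(G) ≤ √(8(1 - λ₂))` for a finite connected
weighted graph, where `λ₂` is the second largest eigenvalue of `N = D^{-1/2} A D^{-1/2}`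
(characterized as the largest eigenvalue on the orthogonal complement of the top
eigenvector `w i = √(deg i)`). -/
theorem cheeger_hard_direction {n : ℕ} (hn : 2 ≤ n)
    (A : Matrix (Fin n) (Fin n) ℝ) (hsym : A.IsSymm) (hnn : ∀ i j, 0 ≤ A i j)
    (deg : Fin n → ℝ) (hdeg : ∀ i, deg i = ∑ j, A i j) (hdpos : ∀ i, 0 < deg i)
    (hconn : ∀ S : Finset (Fin n), S.Nonempty → S ≠ Finset.univ →
      ∃ u ∈ S, ∃ vtx ∈ Sᶜ, 0 < A u vtx)
    (N : Matrix (Fin n) (Fin n) ℝ)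
    (hN : ∀ i j, N i j = A i j / (Real.sqrt (deg i) * Real.sqrt (deg j)))
    (w : Fin n → ℝ) (hw : ∀ i, w i = Real.sqrt (deg i))
    (lam2 : ℝ) (v2 : Fin n → ℝ) (hv2 : v2 ≠ 0) (hv2w : v2 ⬝ᵥ w = 0)
    (heig : N.mulVec v2 = lam2 • v2)
    (hmax : ∀ (μ : ℝ) (x : Fin n → ℝ), x ≠ 0 → x ⬝ᵥ w = 0 →
      N.mulVec x = μ • x → μ ≤ lam2)
    (cut vol : Finset (Fin n) → ℝ)
    (hcut : ∀ S, cut S = ∑ u ∈ S, ∑ v ∈ Sᶜ, A u v)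
    (hvol : ∀ S, vol S = ∑ u ∈ S, ∑ v, A u v)
    (phi : Finset (Fin n) → ℝ)
    (hphi : ∀ S, phi S = cut S / min (vol S) (vol Sᶜ))
    (cand : Finset (Finset (Fin n)))
    (hcand : cand = Finset.univ.filter (fun S => S.Nonempty ∧ S ≠ Finset.univ))
    (hne : cand.Nonempty) :
    cand.inf' hne phi ≤ Real.sqrt (8 * (1 - lam2)) :=
  cheeger_hard_direction_general A hsym hnn deg hdeg hdpos N hN w hw lam2 v2 hv2 hv2w heig cut vol
    hcut hvol phi hphi cand hcand hne
end

section
/- Power method convergence: for a real positive semidefinite symmetric n×n matrix M̃ with largest eigenvalue λ₁ and a unit vector x₀ whose component along a top eigenvector v₁ satisfies |⟨x₀, v₁⟩| ≥ δ > 0, the Rayleigh quotient of xₜ = M̃ᵗ x₀ satisfies (xₜᵀ M̃ xₜ)/(xₜᵀ xₜ) ≥ λ₁ (1−ε) · 1/(1 + δ⁻²(1−ε)^{2t}) for any ε ∈ (0,1). -/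
/-!
Expand `x₀ = ∑ αᵢ vᵢ` in the eigenbasis, so that `xₜ = ∑ αᵢ λᵢᵗ vᵢ` and the Rayleigh quotient is the
mean of the `λᵢ` under the weights `cᵢ = αᵢ² λᵢ^{2t}`. Split the indices at `μ = λ₁(1 - ε)`: the
weight of the indices with `λᵢ ≥ μ` is at least `c₁ ≥ δ² λ₁^{2t}`, while the weight of the others is
at most `μ^{2t} ∑ αᵢ² = μ^{2t}`. Hence the mean is at least `μ / (1 + μ^{2t} / (δ² λ₁^{2t}))`, which
is the claimed bound.
-/

open Matrix Finset

section Orthonormal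

variable {ι : Type*} [Fintype ι] [DecidableEq ι]

theorem sum_smul_dotProduct_sum_smul {κ : Type*} [Fintype κ] {v : ι → κ → ℝ}
    (hv : ∀ i j, v i ⬝ᵥ v j = if i = j then 1 else 0) (a b : ι → ℝ) :
    (∑ i, a i • v i) ⬝ᵥ (∑ j, b j • v j) = ∑ i, a i * b i := by
  simp only [sum_dotProduct, dotProduct_sum, smul_dotProduct, dotProduct_smul, hv,
    smul_eq_mul, mul_ite, mul_one, mul_zero, sum_ite_eq', mem_univ, if_true, mul_comm]

theorem sum_dotProduct_smul_eq_self {v : ι → ι → ℝ}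
    (hv : ∀ i j, v i ⬝ᵥ v j = if i = j then 1 else 0) (x : ι → ℝ) :
    ∑ i, (v i ⬝ᵥ x) • v i = x := by
  have hrow : of v * (of v)ᵀ = 1 := by
    ext i j
    simpa [mul_apply, one_apply, dotProduct] using hv i j
  have hcol : (of v)ᵀ * of v = 1 := mul_eq_one_comm.mp hrow
  calc ∑ i, (v i ⬝ᵥ x) • v i = (of v)ᵀ *ᵥ (of v *ᵥ x) := by
        ext j
        simp [mulVec, dotProduct, Finset.sum_apply, mul_comm]
    _ = x := by rw [mulVec_mulVec, hcol, one_mulVec]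

end Orthonormal

section Eigen

variable {ι κ : Type*} [Fintype ι] [Fintype κ] [DecidableEq κ]

theorem pow_mulVec_eq_pow_smul {M : Matrix κ κ ℝ} {u : κ → ℝ} {l : ℝ} (hu : M *ᵥ u = l • u)
    (k : ℕ) : (M ^ k) *ᵥ u = l ^ k • u := by
  induction k with
  | zero => simp
  | succ k ih => rw [pow_succ', ← mulVec_mulVec, ih, mulVec_smul, hu, smul_smul, pow_succ]

theorem pow_mulVec_sum_smul {M : Matrix κ κ ℝ} {v : ι → κ → ℝ} {l : ι → ℝ}
    (hv : ∀ i, M *ᵥ v i = l i • v i) (a : ι → ℝ) (k : ℕ) :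
    (M ^ k) *ᵥ ∑ i, a i • v i = ∑ i, (a i * l i ^ k) • v i := by
  simp only [mulVec_sum, mulVec_smul, pow_mulVec_eq_pow_smul (hv _), smul_smul]

end Eigen

section Threshold

variable {ι : Type*} [Fintype ι]

theorem sum_filter_lt_mul_pow_le {w l : ι → ℝ} (hw : ∀ i, 0 ≤ w i) (hl : ∀ i, 0 ≤ l i)
    {μ : ℝ} (hμ : 0 ≤ μ) (k : ℕ) :
    ∑ i ∈ univ.filter (fun i => l i < μ), w i * l i ^ k ≤ μ ^ k * ∑ i, w i := by
  calc ∑ i ∈ univ.filter (fun i => l i < μ), w i * l i ^ k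
      ≤ ∑ i ∈ univ.filter (fun i => l i < μ), w i * μ ^ k := by
        refine sum_le_sum fun i hi => mul_le_mul_of_nonneg_left ?_ (hw i)
        exact pow_le_pow_left₀ (hl i) (mem_filter.mp hi).2.le k
    _ ≤ ∑ i, w i * μ ^ k :=
        sum_le_sum_of_subset_of_nonneg (filter_subset _ _) fun i _ _ =>
          mul_nonneg (hw i) (pow_nonneg hμ k)
    _ = μ ^ k * ∑ i, w i := by rw [← sum_mul, mul_comm]

theorem div_one_add_div_le_sum_mul_div_sum {c l : ι → ℝ} (hc : ∀ i, 0 ≤ c i)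
    (hl : ∀ i, 0 ≤ l i) {μ a B : ℝ} (hμ : 0 ≤ μ) {i₀ : ι} (hi₀ : μ ≤ l i₀) (ha : 0 < a)
    (hai₀ : a ≤ c i₀) (hB : ∑ i ∈ univ.filter (fun i => l i < μ), c i ≤ B) :
    μ / (1 + B / a) ≤ (∑ i, c i * l i) / ∑ i, c i := by
  set A := ∑ i ∈ univ.filter (fun i => μ ≤ l i), c i
  set L := ∑ i ∈ univ.filter (fun i => l i < μ), c i
  have hAa : a ≤ A := hai₀.trans (single_le_sum (fun i _ => hc i) (by simpa using hi₀))
  have hL : 0 ≤ L := sum_nonneg fun i _ => hc i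
  have hsplit : ∑ i, c i = A + L := by
    simpa [not_le] using (sum_filter_add_sum_filter_not univ (fun i => μ ≤ l i) c).symm
  have hnum : μ * A ≤ ∑ i, c i * l i := by
    calc μ * A = ∑ i ∈ univ.filter (fun i => μ ≤ l i), c i * μ := by
          rw [mul_sum]
          exact sum_congr rfl fun i _ => mul_comm _ _
      _ ≤ ∑ i ∈ univ.filter (fun i => μ ≤ l i), c i * l i :=
          sum_le_sum fun i hi => mul_le_mul_of_nonneg_left (mem_filter.mp hi).2 (hc i)
      _ ≤ ∑ i, c i * l i :=
          sum_le_sum_of_subset_of_nonneg (filter_subset _ _) fun i _ _ => mul_nonneg (hc i) (hl i)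
  rw [hsplit, one_add_div ha.ne', div_div_eq_mul_div,
    div_le_div_iff₀ (by linarith) (by linarith)]
  nlinarith [mul_le_mul hAa hB hL (ha.le.trans hAa),
    mul_le_mul_of_nonneg_right hnum (by linarith : 0 ≤ a + B)]

end Threshold

theorem power_method_rayleigh_bound_general {n : ℕ}
    (M : Matrix (Fin (n + 1)) (Fin (n + 1)) ℝ)
    (v : Fin (n + 1) → Fin (n + 1) → ℝ) (lam : Fin (n + 1) → ℝ)
    (hortho : ∀ i j, v i ⬝ᵥ v j = if i = j then (1 : ℝ) else 0)
    (heig : ∀ i, M.mulVec (v i) = lam i • v i)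
    (hnn : ∀ i, 0 ≤ lam i)
    (x0 : Fin (n + 1) → ℝ) (hx0 : x0 ⬝ᵥ x0 = 1)
    (δ : ℝ) (hδ : 0 < δ) (hcomp : δ ≤ |x0 ⬝ᵥ v 0|)
    (ε : ℝ) (hε0 : 0 < ε) (hε1 : ε < 1) (t : ℕ)
    (xt : Fin (n + 1) → ℝ) (hxt : xt = (M ^ t).mulVec x0) :
    lam 0 * (1 - ε) * (1 / (1 + (δ⁻¹) ^ 2 * (1 - ε) ^ (2 * t))) ≤
      (xt ⬝ᵥ M.mulVec xt) / (xt ⬝ᵥ xt) := by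
  set α := fun i => v i ⬝ᵥ x0
  have hx0_exp : x0 = ∑ i, α i • v i := (sum_dotProduct_smul_eq_self hortho x0).symm
  have hcoef : ∀ k, (M ^ k) *ᵥ x0 = ∑ i, (α i * lam i ^ k) • v i := fun k => by
    rw [hx0_exp, pow_mulVec_sum_smul heig]
  have hden : xt ⬝ᵥ xt = ∑ i, α i ^ 2 * lam i ^ (2 * t) := by
    rw [hxt, hcoef, sum_smul_dotProduct_sum_smul hortho]
    exact sum_congr rfl fun i _ => by ring
  have hnum : xt ⬝ᵥ M *ᵥ xt = ∑ i, α i ^ 2 * lam i ^ (2 * t) * lam i := by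
    rw [hxt, mulVec_mulVec, ← pow_succ', hcoef, hcoef, sum_smul_dotProduct_sum_smul hortho]
    exact sum_congr rfl fun i _ => by ring
  have hα : ∑ i, α i ^ 2 = 1 := by
    rw [← hx0, hx0_exp, sum_smul_dotProduct_sum_smul hortho]
    exact sum_congr rfl fun i _ => sq (α i)
  have hc : ∀ i, 0 ≤ α i ^ 2 * lam i ^ (2 * t) := fun i =>
    mul_nonneg (sq_nonneg _) (pow_nonneg (hnn i) _)
  rw [hnum, hden]
  rcases (hnn 0).eq_or_lt with h0 | h0
  · rw [← h0, zero_mul, zero_mul]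
    exact div_nonneg (sum_nonneg fun i _ => mul_nonneg (hc i) (hnn i))
      (sum_nonneg fun i _ => hc i)
  set μ := lam 0 * (1 - ε)
  have hμ : 0 ≤ μ := mul_nonneg (hnn 0) (by linarith)
  have hμ0 : μ ≤ lam 0 := mul_le_of_le_one_right (hnn 0) (by linarith)
  have hδα : δ ^ 2 ≤ α 0 ^ 2 := by
    rw [← sq_abs (α 0)]
    exact pow_le_pow_left₀ hδ.le (by simpa [α, dotProduct_comm] using hcomp) 2
  have hlow : ∑ i ∈ univ.filter (fun i => lam i < μ), α i ^ 2 * lam i ^ (2 * t) ≤ μ ^ (2 * t) :=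
    (sum_filter_lt_mul_pow_le (fun i => sq_nonneg _) hnn hμ _).trans_eq (by rw [hα, mul_one])
  have hratio : μ ^ (2 * t) / (δ ^ 2 * lam 0 ^ (2 * t)) = δ⁻¹ ^ 2 * (1 - ε) ^ (2 * t) := by
    simp only [μ, mul_pow]
    field_simp
  have key := div_one_add_div_le_sum_mul_div_sum hc hnn hμ hμ0
    (by positivity : 0 < δ ^ 2 * lam 0 ^ (2 * t))
    (mul_le_mul_of_nonneg_right hδα (by positivity)) hlow
  rw [hratio] at key
  rwa [mul_one_div]

/-- Power method convergence: for a real symmetric PSD matrix with orthonormal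
eigenbasis `v`, eigenvalues `lam` with top eigenvalue `lam 0`, and a unit starting
vector with `|⟨x₀, v₁⟩| ≥ δ > 0`, the Rayleigh quotient of `xₜ = M̃ᵗ x₀` satisfies
`R(xₜ) ≥ λ₁(1-ε) · 1/(1 + δ⁻²(1-ε)^{2t})` for any `ε ∈ (0,1)`. -/
theorem power_method_rayleigh_bound {n : ℕ}
    (M : Matrix (Fin (n + 1)) (Fin (n + 1)) ℝ) (hsym : M.IsSymm)
    (v : Fin (n + 1) → Fin (n + 1) → ℝ) (lam : Fin (n + 1) → ℝ)
    (hortho : ∀ i j, v i ⬝ᵥ v j = if i = j then (1 : ℝ) else 0)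
    (heig : ∀ i, M.mulVec (v i) = lam i • v i)
    (hnn : ∀ i, 0 ≤ lam i) (htop : ∀ i, lam i ≤ lam 0)
    (x0 : Fin (n + 1) → ℝ) (hx0 : x0 ⬝ᵥ x0 = 1)
    (δ : ℝ) (hδ : 0 < δ) (hcomp : δ ≤ |x0 ⬝ᵥ v 0|)
    (ε : ℝ) (hε0 : 0 < ε) (hε1 : ε < 1) (t : ℕ)
    (xt : Fin (n + 1) → ℝ) (hxt : xt = (M ^ t).mulVec x0) (hxtne : xt ≠ 0) :
    lam 0 * (1 - ε) * (1 / (1 + (δ⁻¹) ^ 2 * (1 - ε) ^ (2 * t))) ≤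
      (xt ⬝ᵥ M.mulVec xt) / (xt ⬝ᵥ xt) :=
  power_method_rayleigh_bound_general M v lam hortho heig hnn x0 hx0 δ hδ hcomp ε hε0 hε1 t xt hxt
end
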